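/- Every vertex that is odd or unreachable in a bipartite graph G1 (with respect to the Gallai-Edmonds decomposition) is matched in every maximum cardinality matching of G1. -/

import Mathlib

/-!
Start at a vertex exposed by the maximum matching `M` and walk alternately along edges of
`M₀` and `M`. Since both matchings are injective and the start is `M`-exposed, the walk never
revisits a vertex, so it stops. It cannot stop at an `M`-exposed vertex, since then `M` would
be augmentable; so it stops at an `M₀`-exposed vertex, and read backwards it shows that the
start is even for `M₀`. As `M₀` is maximum, no vertex is both even and odd for it: that would
give an alternating walk between two exposed vertices, and such a walk can be shortcut to an
augmenting path.
-/

universe u v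

/-- A matching assigns to each person at most one item, injectively on items. -/
def IsMatching {α β : Type*} (M : α → Option β) : Prop :=
  ∀ a a' b, M a = some b → M a' = some b → a = a'

/-- A matching using only edges of the bipartite graph `E`. -/
def IsMatchingOn {α β : Type*} (E : α → β → Prop) (M : α → Option β) : Prop :=
  (∀ a b, M a = some b → E a b) ∧ IsMatching M

/-- Number of matched people (= number of edges of the matching). -/
noncomputable def msize {α β : Type*} [Fintype α] (M : α → Option β) : ℕ :=
  Nat.card {a // (M a).isSome}

/-- A maximum cardinality matching of the bipartite graph `E`. -/
def IsMaxMatchingOn {α β : Type*} [Fintype α] (E : α → β → Prop) (M : α → Option β) : Prop :=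
  IsMatchingOn E M ∧ ∀ M', IsMatchingOn E M' → msize M' ≤ msize M

mutual
  /-- A person reachable from an `M`-unmatched vertex by an even-length alternating path
  (such paths start at an unmatched person). -/
  inductive EvenA {α : Type u} {β : Type v} (E : α → β → Prop) (M : α → Option β) : α → Prop
    | base (a : α) : M a = none → EvenA E M a
    | step (a : α) (b : β) : OddB E M b → M a = some b → EvenA E M a
  /-- An item reachable from an `M`-unmatched vertex by an odd-length alternating path. -/
  inductive OddB {α : Type u} {β : Type v} (E : α → β → Prop) (M : α → Option β) : β → Prop
    | step (a : α) (b : β) : EvenA E M a → E a b → M a ≠ some b → OddB E M b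
end

mutual
  /-- An item reachable from an `M`-unmatched vertex by an even-length alternating path
  (such paths start at an unmatched item). -/
  inductive EvenB {α : Type u} {β : Type v} (E : α → β → Prop) (M : α → Option β) : β → Prop
    | base (b : β) : (∀ a, M a ≠ some b) → EvenB E M b
    | step (a : α) (b : β) : OddA E M a → M a = some b → EvenB E M b
  /-- A person reachable from an `M`-unmatched vertex by an odd-length alternating path. -/
  inductive OddA {α : Type u} {β : Type v} (E : α → β → Prop) (M : α → Option β) : α → Prop
    | step (a : α) (b : β) : EvenB E M b → E a b → M a ≠ some b → OddA E M a
end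

/-- An unreachable person: no alternating path from an unmatched vertex reaches it. -/
def UnreachA {α β : Type*} (E : α → β → Prop) (M : α → Option β) (a : α) : Prop :=
  ¬ EvenA E M a ∧ ¬ OddA E M a

/-- An unreachable item: no alternating path from an unmatched vertex reaches it. -/
def UnreachB {α β : Type*} (E : α → β → Prop) (M : α → Option β) (b : β) : Prop :=
  ¬ EvenB E M b ∧ ¬ OddB E M b

open Function

theorem Finite.exists_rel_of_forall_exists_rel {γ : Type*} [Finite γ] {r : γ → γ → Prop}
    (hr : ∀ x x' y, r x y → r x' y → x = x') {p : γ → Prop}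
    (hp : ∀ x, p x → ∃ y, p y ∧ r x y) {z : γ} (hz : p z) : ∃ x, p x ∧ r x z := by
  choose f hf using hp
  let g : {x // p x} → {x // p x} := fun x => ⟨f x x.2, (hf x x.2).1⟩
  have hg : Injective g := fun x x' h => by
    have h' : f x x.2 = f x' x'.2 := congrArg Subtype.val h
    exact Subtype.ext (hr x x' _ (hf x x.2).2 (h' ▸ (hf x' x'.2).2))
  obtain ⟨x, hx⟩ := Finite.surjective_of_injective hg ⟨z, hz⟩
  have hx' : f x x.2 = z := congrArg Subtype.val hx
  exact ⟨x, x.2, hx' ▸ (hf x x.2).2⟩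

section Matching

variable {α β : Type*} {E : α → β → Prop} {M : α → Option β}

theorem msize_eq_ncard [Fintype α] (M : α → Option β) :
    msize M = {a | (M a).isSome}.ncard :=
  Nat.card_coe_set_eq _

theorem msize_update_some [Fintype α] [DecidableEq α] {a : α} (ha : M a = none) (b : β) :
    msize (update M a (some b)) = msize M + 1 := by
  have : {y | (update M a (some b) y).isSome} = insert a {y | (M y).isSome} := by
    ext y
    rcases eq_or_ne y a with rfl | hy <;> simp [*]
  rw [msize_eq_ncard, msize_eq_ncard, this, Set.ncard_insert_of_notMem (by simp [ha])]

theorem msize_update_none [Fintype α] [DecidableEq α] {x : α} {b : β} (hx : M x = some b) :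
    msize (update M x none) + 1 = msize M := by
  have : {y | (update M x none y).isSome} = {y | (M y).isSome} \ {x} := by
    ext y
    rcases eq_or_ne y x with rfl | hy <;> simp [*]
  rw [msize_eq_ncard, msize_eq_ncard, this, Set.ncard_sdiff_singleton_add_one (by simp [hx])]

theorem IsMatchingOn.update_none [DecidableEq α] (hM : IsMatchingOn E M) (x : α) :
    IsMatchingOn E (update M x none) := by
  refine ⟨fun y b hy => hM.1 y b ?_, fun y y' b hy hy' => hM.2 y y' b ?_ ?_⟩ <;>
    simp_all [update_apply]

theorem IsMatchingOn.update_some [DecidableEq α] (hM : IsMatchingOn E M) {a : α} {b : β}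
    (hab : E a b) (hb : ∀ y, y ≠ a → M y ≠ some b) :
    IsMatchingOn E (update M a (some b)) := by
  have key : ∀ y c, update M a (some b) y = some c →
      y = a ∧ c = b ∨ y ≠ a ∧ M y = some c := by
    intro y c h
    rcases eq_or_ne y a with rfl | hy <;> simp_all
  refine ⟨fun y c hy => ?_, fun y y' c hy hy' => ?_⟩
  · rcases key y c hy with ⟨rfl, rfl⟩ | ⟨-, h⟩
    exacts [hab, hM.1 y c h]
  · rcases key y c hy with ⟨rfl, rfl⟩ | ⟨hya, h⟩ <;>
      rcases key y' c hy' with ⟨rfl, hc⟩ | ⟨hy'a, h'⟩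
    · rfl
    · exact absurd h' (hb y' hy'a)
    · exact absurd (hc ▸ h) (hb y hya)
    · exact hM.2 y y' c h h'

end Matching

section Augmentation

variable {α β : Type*} {E : α → β → Prop}

/-- Items reachable from an exposed item by an alternating walk whose matched edges have
their person in `S`. -/
inductive AltReachable (E : α → β → Prop) (M : α → Option β) (S : Finset α) : β → Prop
  | exposed (b : β) : (∀ a, M a ≠ some b) → AltReachable E M S b
  | step (x : α) (b' b : β) : AltReachable E M S b' → x ∈ S → E x b' → M x = some b →
      AltReachable E M S b

variable {M M' : α → Option β} {S : Finset α}

theorem AltReachable.of_agree {c : β} (h : AltReachable E M S c)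
    (hS : ∀ z ∈ S, ∀ d, M z = some d → M' z = some d)
    (hexp : ∀ d, (∀ y, M y ≠ some d) → ∀ y, M' y ≠ some d) : AltReachable E M' S c := by
  induction h with
  | exposed b hb => exact .exposed b (hexp b hb)
  | step x b' b _ hx hE hxb ih => exact .step x b' b ih hx hE (hS x hx b hxb)

theorem AltReachable.erase_or [DecidableEq α] {c : β} (h : AltReachable E M S c) (x : α) :
    AltReachable E M (S.erase x) c ∨ ∃ b, AltReachable E M (S.erase x) b ∧ E x b := by
  induction h with
  | exposed b hb => exact .inl (.exposed b hb)
  | step z b' b hb' hz hE hzb ih =>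
    rcases eq_or_ne z x with rfl | hzx
    · exact .inr (ih.elim (fun h => ⟨b', h, hE⟩) id)
    · exact ih.imp_left fun h => .step z b' b h (Finset.mem_erase.2 ⟨hzx, hz⟩) hE hzb

theorem AltReachable.exists_msize_lt [Fintype α] [DecidableEq α] {b : β}
    (hb : AltReachable E M S b) (hM : IsMatchingOn E M) {a : α} (ha : M a = none)
    (hab : E a b) : ∃ M', IsMatchingOn E M' ∧ msize M < msize M' := by
  induction S using Finset.strongInduction generalizing M a b with
  | H S ih =>
    cases hb with
    | exposed _ hexp =>
      exact ⟨_, hM.update_some hab fun y _ => hexp y, by rw [msize_update_some ha]; omega⟩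
    | step x b' _ hb' hxS hxb' hx =>
      obtain ⟨c, hc, hxc⟩ : ∃ c, AltReachable E M (S.erase x) c ∧ E x c :=
        (hb'.erase_or x).elim (fun h => ⟨b', h, hxb'⟩) id
      have hax : a ≠ x := by rintro rfl; simp_all
      -- moving `b` from `x` to `a` keeps the size and exposes `x`, whose neighbour `c` is
      -- reachable without using `x`: recurse on `S.erase x`
      set M₁ := update (update M x none) a (some b)
      have hM₁ : IsMatchingOn E M₁ := by
        refine (hM.update_none x).update_some hab fun y hy => ?_
        rcases eq_or_ne y x with rfl | hyx
        · simp
        · simpa [hyx] using fun h => hyx (hM.2 y x b h hx)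
      have hsize : msize M₁ = msize M := by
        rw [msize_update_some (by simp [hax, ha]), msize_update_none hx]
      have hc₁ : AltReachable E M₁ (S.erase x) c := by
        refine hc.of_agree (fun z hz d hzd => ?_) (fun d hd y => ?_)
        · have hza : z ≠ a := by rintro rfl; simp_all
          simp [M₁, hza, (Finset.mem_erase.1 hz).1, hzd]
        · rcases eq_or_ne y a with rfl | hya
          · simpa [M₁] using fun h : b = d => hd x (h ▸ hx)
          · rcases eq_or_ne y x with rfl | hyx
            · simp [M₁, hya]
            · simpa [M₁, hya, hyx] using hd y
      obtain ⟨M', hM', hlt⟩ :=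
        ih _ (Finset.erase_ssubset hxS) hc₁ hM₁ (by simp [M₁, hax.symm]) hxc
      exact ⟨M', hM', hsize ▸ hlt⟩

end Augmentation

section Parity

variable {α β : Type*} {E : α → β → Prop} {M : α → Option β}

theorem EvenB.altReachable [Fintype α] {b : β} (h : EvenB E M b) :
    AltReachable E M Finset.univ b :=
  EvenB.rec (motive_1 := fun b _ => AltReachable E M Finset.univ b)
    (motive_2 := fun a _ => ∃ b, AltReachable E M Finset.univ b ∧ E a b)
    (fun b hb => .exposed b hb)
    (fun a b _ hab ⟨b', hb', hab'⟩ => .step a b' b hb' (Finset.mem_univ a) hab' hab)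
    (fun _ b _ hab _ hb => ⟨b, hb, hab⟩) h

theorem IsMaxMatchingOn.not_oddA_of_eq_none [Fintype α] (hM : IsMaxMatchingOn E M) {a : α}
    (ha : M a = none) : ¬ OddA E M a := by
  rintro ⟨_, b, hb, hab, -⟩
  classical
  obtain ⟨M', hM', hlt⟩ := hb.altReachable.exists_msize_lt hM.1 ha hab
  exact (hM.2 M' hM').not_gt hlt

theorem EvenA.exists_eq_none_oddA {a : α} (h : EvenA E M a) (hodd : OddA E M a) :
    ∃ a₀, M a₀ = none ∧ OddA E M a₀ :=
  EvenA.rec (motive_1 := fun a _ => OddA E M a → ∃ a₀, M a₀ = none ∧ OddA E M a₀)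
    (motive_2 := fun b _ => EvenB E M b → ∃ a₀, M a₀ = none ∧ OddA E M a₀)
    (fun a ha hodd => ⟨a, ha, hodd⟩)
    (fun a b _ hab ih hodd => ih (.step a b hodd hab))
    (fun a b _ hab hne ih hb => ih (.step a b hb hab hne)) h hodd

theorem IsMaxMatchingOn.not_oddA_of_evenA [Fintype α] (hM : IsMaxMatchingOn E M) {a : α}
    (h : EvenA E M a) : ¬ OddA E M a := fun hodd =>
  let ⟨_, ha₀, hodd₀⟩ := h.exists_eq_none_oddA hodd
  hM.not_oddA_of_eq_none ha₀ hodd₀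

theorem IsMaxMatchingOn.not_oddB_of_evenB [Fintype α] (hM : IsMaxMatchingOn E M) {b : β}
    (h : EvenB E M b) : ¬ OddB E M b := by
  rintro ⟨a, _, ha, hab, hne⟩
  cases h with
  | base _ hb => exact hM.not_oddA_of_evenA ha (.step a b (.base b hb) hab hne)
  | step a' _ hodd hab' => exact hM.not_oddA_of_evenA (.step a' b (.step a b ha hab hne) hab') hodd

end Parity

section Independence

variable {α β : Type*} [Fintype α] {E : α → β → Prop} {M₀ M : α → Option β}

theorem IsMaxMatchingOn.evenA_of_eq_none (hM : IsMaxMatchingOn E M) (hM₀ : IsMatchingOn E M₀)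
    {a : α} (ha : M a = none) : EvenA E M₀ a := by
  by_contra h
  have hstep : ∀ x, ¬ EvenA E M₀ x ∧ ¬ OddA E M x →
      ∃ y, (¬ EvenA E M₀ y ∧ ¬ OddA E M y) ∧ ∃ b, M₀ x = some b ∧ M y = some b := by
    rintro x ⟨hx₀, hx⟩
    obtain ⟨b, hxb⟩ := Option.ne_none_iff_exists'.1 fun h => hx₀ (.base x h)
    obtain ⟨y, hyb⟩ : ∃ y, M y = some b := by
      by_contra! hb
      exact hx (.step x b (.base b hb) (hM₀.1 x b hxb) (hb x))
    refine ⟨y, ?_, b, hxb, hyb⟩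
    rcases eq_or_ne y x with rfl | hyx
    · exact ⟨hx₀, hx⟩
    have hy₀ : M₀ y ≠ some b := fun h => hyx (hM₀.2 y x b h hxb)
    have hxb' : M x ≠ some b := fun h => hyx (hM.1.2 y x b hyb h)
    exact ⟨fun hy => hx₀ (.step x b (.step y b hy (hM.1.1 y b hyb) hy₀) hxb),
      fun hy => hx (.step x b (.step y b hy hyb) (hM₀.1 x b hxb) hxb')⟩
  obtain ⟨x, -, b, -, hab⟩ := Finite.exists_rel_of_forall_exists_rel
    (fun x x' y ⟨b, hxb, hyb⟩ ⟨b', hxb', hyb'⟩ =>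
      hM₀.2 x x' b hxb (Option.some.inj (hyb.symm.trans hyb') ▸ hxb'))
    hstep ⟨h, hM.not_oddA_of_eq_none ha⟩
  simp [ha] at hab

theorem IsMaxMatchingOn.evenB_of_forall_ne (hM : IsMaxMatchingOn E M) (hM₀ : IsMatchingOn E M₀)
    {b : β} (hb : ∀ a, M a ≠ some b) : EvenB E M₀ b := by
  by_contra h
  obtain ⟨x₀, hx₀b⟩ : ∃ x₀, M₀ x₀ = some b := by
    by_contra! hb₀
    exact h (.base b hb₀)
  have hstep : ∀ x, ¬ OddA E M₀ x ∧ ¬ EvenA E M x →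
      ∃ y, (¬ OddA E M₀ y ∧ ¬ EvenA E M y) ∧ ∃ c, M x = some c ∧ M₀ y = some c := by
    rintro x ⟨hx₀, hx⟩
    obtain ⟨c, hxc⟩ := Option.ne_none_iff_exists'.1 fun h => hx (.base x h)
    obtain ⟨y, hyc⟩ : ∃ y, M₀ y = some c := by
      by_contra! hc
      exact hx₀ (.step x c (.base c hc) (hM.1.1 x c hxc) (hc x))
    refine ⟨y, ?_, c, hxc, hyc⟩
    rcases eq_or_ne y x with rfl | hyx
    · exact ⟨hx₀, hx⟩
    have hx₀c : M₀ x ≠ some c := fun h => hyx (hM₀.2 y x c hyc h)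
    have hyc' : M y ≠ some c := fun h => hyx (hM.1.2 y x c h hxc)
    exact ⟨fun hy => hx₀ (.step x c (.step y c hy hyc) (hM.1.1 x c hxc) hx₀c),
      fun hy => hx (.step x c (.step y c hy (hM₀.1 y c hyc) hyc') hxc)⟩
  obtain ⟨x, -, c, hxc, hx₀c⟩ := Finite.exists_rel_of_forall_exists_rel
    (fun x x' y ⟨c, hxc, hyc⟩ ⟨c', hxc', hyc'⟩ =>
      hM.1.2 x x' c hxc (Option.some.inj (hyc.symm.trans hyc') ▸ hxc'))
    hstep ⟨fun hodd => h (.step x₀ b hodd hx₀b), fun heven =>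
      hM.not_oddB_of_evenB (.base b hb) (.step x₀ b heven (hM₀.1 x₀ b hx₀b) (hb x₀))⟩
  exact hb x (Option.some.inj (hx₀b.symm.trans hx₀c) ▸ hxc)

end Independence

/-- Every odd or unreachable (i.e. critical) vertex of the Gallai–Edmonds decomposition
(taken with respect to a maximum matching `M0`) is matched in every maximum cardinality
matching of the bipartite graph `E`. -/
theorem critical_vertices_always_matched {α β : Type*} [Fintype α]
    (E : α → β → Prop) (M0 : α → Option β) (hM0 : IsMaxMatchingOn E M0)
    (M : α → Option β) (hM : IsMaxMatchingOn E M) :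
    (∀ a, OddA E M0 a ∨ UnreachA E M0 a → (M a).isSome) ∧
    (∀ b, OddB E M0 b ∨ UnreachB E M0 b → ∃ a, M a = some b) := by
  refine ⟨fun a ha => ?_, fun b hb => ?_⟩
  · by_contra hnone
    have heven := hM.evenA_of_eq_none hM0.1 (Option.not_isSome_iff_eq_none.1 hnone)
    exact ha.elim (hM0.not_oddA_of_evenA heven) fun hun => hun.1 heven
  · by_contra! hnone
    have heven := hM.evenB_of_forall_ne hM0.1 hnone
    exact hb.elim (hM0.not_oddB_of_evenB heven) fun hun => hun.1 heven
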